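/- Let F be the CDF of the χ²₁ distribution. For every fixed x > 0, lim_{d→∞} d · log(1 − F(x/d²)) = −√(2x/π). -/

import Mathlib

open MeasureTheory ProbabilityTheory Filter Real

/-- The chi-square distribution with one degree of freedom. -/
noncomputable def chiSqOne : Measure ℝ :=
  Measure.map (fun z : ℝ => z ^ 2) (gaussianReal 0 1)

/-- The CDF of `χ²₁`. -/
noncomputable def chiSqOneCDF (t : ℝ) : ℝ := (chiSqOne (Set.Iic t)).toReal

/-!
Writing `t = s²`, the CDF is `F(s²) = ∫_{-s}^{s} φ`, whose derivative at `s = 0` is `2 φ(0)`;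
hence `F(t) ~ 2 φ(0) √t = √(2t/π)` as `t → 0⁺`. Along `t = x/d²` this gives
`d · F(x/d²) → √(2x/π)`, and since `log (1 - y) ~ -y` as `y → 0` the claim follows.
-/

open Topology

theorem hasDerivAt_integral_neg_self {E : Type*} [NormedAddCommGroup E] [NormedSpace ℝ E]
    [CompleteSpace E] {f : ℝ → E} (hf : Continuous f) (s : ℝ) :
    HasDerivAt (fun u => ∫ z in -u..u, f z) (f s + f (-s)) s := by
  have hleft : HasDerivAt (fun u => ∫ z in (0 : ℝ)..-u, f z) (-f (-s)) s := by
    simpa [Function.comp_def] using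
      (hf.integral_hasStrictDerivAt 0 (-s)).hasDerivAt.scomp s (hasDerivAt_neg s)
  have hsplit : (fun u => ∫ z in -u..u, f z) =
      fun u => (∫ z in (0 : ℝ)..u, f z) - ∫ z in (0 : ℝ)..-u, f z := by
    ext u
    rw [intervalIntegral.integral_interval_sub_left (hf.intervalIntegrable _ _)
      (hf.intervalIntegrable _ _)]
  rw [hsplit, ← sub_neg_eq_add]
  exact (hf.integral_hasStrictDerivAt 0 s).hasDerivAt.sub hleft

theorem tendsto_integral_neg_self_div {f : ℝ → ℝ} (hf : Continuous f) :
    Tendsto (fun s => (∫ z in -s..s, f z) / s) (𝓝[≠] 0) (𝓝 (2 * f 0)) := by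
  have h := (hasDerivAt_integral_neg_self hf 0).tendsto_slope_zero
  rw [neg_zero, ← two_mul] at h
  simpa [div_eq_inv_mul] using h

theorem tendsto_mul_log_one_sub {ι : Type*} {l : Filter ι} {c u : ι → ℝ} {L : ℝ}
    (hu : Tendsto u l (𝓝[≠] 0)) (hcu : Tendsto (fun i => c i * u i) l (𝓝 L)) :
    Tendsto (fun i => c i * log (1 - u i)) l (𝓝 (-L)) := by
  have hlog : HasDerivAt (fun y => log (1 - y)) (-1) 0 := by
    simpa using ((hasDerivAt_id (0 : ℝ)).const_sub 1).log (by norm_num)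
  have hslope : Tendsto (fun y => log (1 - y) / y) (𝓝[≠] 0) (𝓝 (-1)) := by
    simpa [div_eq_inv_mul] using hlog.tendsto_slope_zero
  have hlim := hcu.mul (hslope.comp hu)
  rw [mul_neg_one] at hlim
  refine hlim.congr' ?_
  filter_upwards [hu self_mem_nhdsWithin] with i (hi : u i ≠ 0)
  simp only [Function.comp_apply]
  field_simp

theorem continuous_gaussianPDFReal (μ : ℝ) (v : NNReal) : Continuous (gaussianPDFReal μ v) := by
  rw [gaussianPDFReal_def]
  fun_prop

theorem chiSqOneCDF_eq_integral {t : ℝ} (ht : 0 ≤ t) :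
    chiSqOneCDF t = ∫ z in -√t..√t, gaussianPDFReal 0 1 z := by
  have hpre : (fun z : ℝ => z ^ 2) ⁻¹' Set.Iic t = Set.Icc (-√t) √t := by
    ext z
    simp only [Set.mem_preimage, Set.mem_Iic, Set.mem_Icc, ← abs_le]
    rw [← sqrt_le_sqrt_iff ht, sqrt_sq_eq_abs]
  rw [chiSqOneCDF, chiSqOne, Measure.map_apply (by fun_prop) measurableSet_Iic, hpre,
    gaussianReal_apply_eq_integral 0 one_ne_zero, ENNReal.toReal_ofReal
      (setIntegral_nonneg measurableSet_Icc fun z _ => gaussianPDFReal_nonneg 0 1 z),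
    integral_Icc_eq_integral_Ioc, intervalIntegral.integral_of_le (neg_le_self (sqrt_nonneg t))]

theorem chiSqOneCDF_pos {t : ℝ} (ht : 0 < t) : 0 < chiSqOneCDF t := by
  rw [chiSqOneCDF_eq_integral ht.le]
  exact intervalIntegral.intervalIntegral_pos_of_pos
    ((continuous_gaussianPDFReal 0 1).intervalIntegrable _ _)
    (fun z => gaussianPDFReal_pos 0 1 z one_ne_zero) (by linarith [sqrt_pos.2 ht])

theorem two_mul_gaussianPDFReal_zero : 2 * gaussianPDFReal 0 1 0 = √(2 / π) := by
  rw [show (2 : ℝ) / π = 2 ^ 2 / (2 * π) by field_simp, sqrt_div (by positivity),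
    sqrt_sq zero_le_two]
  simp [gaussianPDFReal, div_eq_mul_inv]

theorem tendsto_chiSqOneCDF_div_sqrt :
    Tendsto (fun t => chiSqOneCDF t / √t) (𝓝[>] 0) (𝓝 √(2 / π)) := by
  have hsqrt : Tendsto (√·) (𝓝[>] 0) (𝓝[≠] 0) := by
    refine tendsto_nhdsWithin_of_tendsto_nhds_of_eventually_within _ ?_ ?_
    · simpa using continuous_sqrt.tendsto' 0 0 sqrt_zero |>.mono_left nhdsWithin_le_nhds
    · filter_upwards [self_mem_nhdsWithin] with t (ht : 0 < t)
      exact (sqrt_pos.2 ht).ne'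
  rw [← two_mul_gaussianPDFReal_zero]
  refine ((tendsto_integral_neg_self_div (continuous_gaussianPDFReal 0 1)).comp hsqrt).congr' ?_
  filter_upwards [self_mem_nhdsWithin] with t (ht : 0 < t)
  rw [Function.comp_apply, chiSqOneCDF_eq_integral ht.le]

theorem tendsto_chiSqOneCDF_nhdsGT_zero :
    Tendsto chiSqOneCDF (𝓝[>] 0) (𝓝[>] 0) := by
  refine tendsto_nhdsWithin_of_tendsto_nhds_of_eventually_within _ ?_ ?_
  · have h := (continuous_sqrt.tendsto' 0 0 sqrt_zero |>.mono_left nhdsWithin_le_nhds).mul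
      tendsto_chiSqOneCDF_div_sqrt
    rw [zero_mul] at h
    refine h.congr' ?_
    filter_upwards [self_mem_nhdsWithin] with t (ht : 0 < t)
    field_simp [(sqrt_pos.2 ht).ne']
  · filter_upwards [self_mem_nhdsWithin] with t ht
    exact chiSqOneCDF_pos ht

/-- For every fixed `x > 0`, `d · log(1 − F(x/d²)) → −√(2x/π)` as `d → ∞`, where `F` is the
`χ²₁` CDF. -/
theorem stmt6 (x : ℝ) (hx : 0 < x) :
    Tendsto (fun d : ℕ => (d : ℝ) * Real.log (1 - chiSqOneCDF (x / (d : ℝ) ^ 2)))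
      atTop (nhds (-Real.sqrt (2 * x / π))) := by
  have ht : Tendsto (fun d : ℕ => x / (d : ℝ) ^ 2) atTop (𝓝[>] 0) := by
    refine tendsto_nhdsWithin_of_tendsto_nhds_of_eventually_within _ ?_ ?_
    · exact ((tendsto_pow_atTop two_ne_zero).comp tendsto_natCast_atTop_atTop).const_div_atTop x
    · filter_upwards [eventually_gt_atTop 0] with d hd
      exact div_pos hx (by positivity)
  have hdF : Tendsto (fun d : ℕ => (d : ℝ) * chiSqOneCDF (x / (d : ℝ) ^ 2)) atTop
      (𝓝 √(2 * x / π)) := by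
    rw [show 2 * x / π = x * (2 / π) by ring, sqrt_mul hx.le]
    refine ((tendsto_chiSqOneCDF_div_sqrt.comp ht).const_mul √x).congr' ?_
    filter_upwards [eventually_gt_atTop 0] with d hd
    have hd' : (0 : ℝ) < d := by positivity
    rw [Function.comp_apply, sqrt_div hx.le, sqrt_sq hd'.le]
    field_simp [(sqrt_pos.2 hx).ne']
  exact tendsto_mul_log_one_sub
    ((tendsto_chiSqOneCDF_nhdsGT_zero.comp ht).mono_right (nhdsWithin_mono _ fun _ h => ne_of_gt h))
    hdF
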